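/- arXiv:1905.02770 — 4 statements merged into one kernel-verified Lean document; each statement's English description precedes it below -/
import Mathlib

section
/- For ω > 0, the purely imaginary number λ = iω satisfies the characteristic equation κ₁(λ) + κ₂(λ)e^{-λτ} = 0, where κ₁(λ) = λ² + λβ₀e^{-μ₀τ} + δγ₀y* and κ₂(λ) = -λβ₀e^{-μ₀τ}, if and only if ω² = δγ₀y* and cos(ωτ) = 1. -/
theorem purely_imaginary_root_iff
    (β₀ μ₀ τ δ γ₀ ys : ℝ)
    (hβ : 0 < β₀) (hμ : 0 < μ₀) (hτ : 0 < τ) (hδ : 0 < δ)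
    (hγ : 0 < γ₀) (hy : 0 < ys) :
    ∀ ω : ℝ, 0 < ω →
      ((Complex.I * ω) ^ 2
        + (Complex.I * ω) * ((β₀ * Real.exp (-μ₀ * τ) : ℝ) : ℂ)
        + ((δ * γ₀ * ys : ℝ) : ℂ)
        + (-(Complex.I * ω) * ((β₀ * Real.exp (-μ₀ * τ) : ℝ) : ℂ)) *
            Complex.exp (-(Complex.I * ω) * (τ : ℂ)) = 0 ↔
       (ω ^ 2 = δ * γ₀ * ys ∧ Real.cos (ω * τ) = 1)) := by
  intro ω hω
  have hb : 0 < β₀ * Real.exp (-μ₀ * τ) := mul_pos hβ (Real.exp_pos _)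
  have hexp : Complex.exp (-(Complex.I * ω) * (τ : ℂ))
      = Real.cos (ω * τ) - Real.sin (ω * τ) * Complex.I := by
    have : -(Complex.I * ω) * (τ : ℂ) = ((-(ω * τ) : ℝ) : ℂ) * Complex.I := by
      push_cast; ring
    rw [this, Complex.exp_mul_I]
    rw [show ((-(ω * τ) : ℝ) : ℂ) = -((ω * τ : ℝ) : ℂ) by push_cast; ring,
      Complex.cos_neg, Complex.sin_neg, ← Complex.ofReal_cos, ← Complex.ofReal_sin]
    ring
  rw [hexp]
  rw [Complex.ext_iff]
  simp only [Complex.add_re, Complex.add_im, Complex.mul_re, Complex.mul_im,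
    Complex.I_re, Complex.I_im, Complex.ofReal_re, Complex.ofReal_im,
    Complex.sub_re, Complex.sub_im, Complex.zero_re, Complex.zero_im,
    Complex.neg_re, Complex.neg_im, pow_two]
  constructor
  · rintro ⟨h1, h2⟩
    have hs := Real.sin_sq_add_cos_sq (ω * τ)
    have hcos : Real.cos (ω * τ) = 1 := by
      have : ω * (β₀ * Real.exp (-μ₀ * τ)) * (1 - Real.cos (ω * τ)) = 0 := by
        nlinarith [h2]
      have hne : ω * (β₀ * Real.exp (-μ₀ * τ)) ≠ 0 := by positivity
      have := (mul_eq_zero.1 this).resolve_left hne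
      linarith
    have hsin : Real.sin (ω * τ) = 0 := by nlinarith
    rw [hsin, hcos] at h1
    refine ⟨by nlinarith [h1], hcos⟩
  · rintro ⟨h1, h2⟩
    have hs := Real.sin_sq_add_cos_sq (ω * τ)
    have hsin : Real.sin (ω * τ) = 0 := by nlinarith
    rw [hsin, h2]
    constructor <;> nlinarith
end

section
/- The characteristic equation κ₁(λ) + κ₂(λ)e^{-λτ} = 0, with κ₁(λ) = λ² + λβ₀e^{-μ₀τ} + δγ₀y* and κ₂(λ) = -λβ₀e^{-μ₀τ}, has a nonzero purely imaginary root if and only if τ√(δγ₀y*)/(2π) is a positive integer, and in that case the purely imaginary roots are exactly λ = ±i√(δγ₀y*). -/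
lemma key (b c ω τ : ℝ) (hb : b ≠ 0) (hω : ω ≠ 0) :
    ((Complex.I * ω) ^ 2 + (Complex.I * ω) * (b : ℂ) + (c : ℂ)
      + (-(Complex.I * ω) * (b : ℂ)) * Complex.exp (-(Complex.I * ω) * (τ : ℂ)) = 0)
    ↔ (Real.cos (ω * τ) = 1 ∧ ω ^ 2 = c) := by
  have hexp : Complex.exp (-(Complex.I * ω) * (τ : ℂ))
      = ((Real.cos (ω*τ) : ℝ) : ℂ) - ((Real.sin (ω*τ) : ℝ) : ℂ) * Complex.I := by
    have h1 : -(Complex.I * ω) * (τ : ℂ) = ((-(ω*τ) : ℝ) : ℂ) * Complex.I := by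
      push_cast; ring
    rw [h1, Complex.exp_mul_I]
    push_cast
    rw [Complex.cos_neg, Complex.sin_neg]
    ring
  set co := Real.cos (ω*τ) with hco_def
  set si := Real.sin (ω*τ) with hsi_def
  have expand : (Complex.I * ω) ^ 2 + (Complex.I * ω) * (b : ℂ) + (c : ℂ)
      + (-(Complex.I * ω) * (b : ℂ)) * Complex.exp (-(Complex.I * ω) * (τ : ℂ))
      = (((c - ω^2 - ω*b*si) : ℝ) : ℂ) + (((ω*b - ω*b*co) : ℝ) : ℂ) * Complex.I := by
    have hsq2 : (Complex.I * (ω:ℂ))^2 = ((-(ω^2) : ℝ) : ℂ) := by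
      rw [mul_pow, Complex.I_sq]; push_cast; ring
    rw [hexp, hsq2]
    push_cast
    linear_combination ((ω:ℂ)*b*si) * Complex.I_sq
  rw [expand]
  rw [Complex.ext_iff]
  simp [← Complex.ofReal_pow]
  have hpyth : si^2 + co^2 = 1 := Real.sin_sq_add_cos_sq _
  have hbω : ω * b ≠ 0 := mul_ne_zero hω hb
  constructor
  · rintro ⟨hre, him⟩
    have hco : co = 1 := by
      have : ω * b * (1 - co) = 0 := by ring_nf; linarith [him]
      rcases mul_eq_zero.mp this with h | h
      · exact absurd h hbω
      · linarith
    have hsi : si = 0 := by nlinarith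
    rw [hsi] at hre
    exact ⟨hco, by linarith⟩
  · rintro ⟨hco, hsq⟩
    have hsi : si = 0 := by nlinarith
    constructor
    · rw [hsi, hsq]; ring
    · rw [hco]; ring

theorem purely_imaginary_roots_characterization
    (β₀ μ₀ τ δ γ₀ ys : ℝ)
    (hβ : 0 < β₀) (hμ : 0 < μ₀) (hτ : 0 < τ) (hδ : 0 < δ)
    (hγ : 0 < γ₀) (hy : 0 < ys) :
    ((∃ ω : ℝ, ω ≠ 0 ∧
        (Complex.I * ω) ^ 2
          + (Complex.I * ω) * ((β₀ * Real.exp (-μ₀ * τ) : ℝ) : ℂ)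
          + ((δ * γ₀ * ys : ℝ) : ℂ)
          + (-(Complex.I * ω) * ((β₀ * Real.exp (-μ₀ * τ) : ℝ) : ℂ)) *
              Complex.exp (-(Complex.I * ω) * (τ : ℂ)) = 0) ↔
      (∃ n : ℕ, 0 < n ∧ τ * Real.sqrt (δ * γ₀ * ys) / (2 * Real.pi) = n)) ∧
    ((∃ n : ℕ, 0 < n ∧ τ * Real.sqrt (δ * γ₀ * ys) / (2 * Real.pi) = n) →
      ∀ ω : ℝ, ω ≠ 0 →
        ((Complex.I * ω) ^ 2
          + (Complex.I * ω) * ((β₀ * Real.exp (-μ₀ * τ) : ℝ) : ℂ)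
          + ((δ * γ₀ * ys : ℝ) : ℂ)
          + (-(Complex.I * ω) * ((β₀ * Real.exp (-μ₀ * τ) : ℝ) : ℂ)) *
              Complex.exp (-(Complex.I * ω) * (τ : ℂ)) = 0 ↔
         (ω = Real.sqrt (δ * γ₀ * ys) ∨ ω = -Real.sqrt (δ * γ₀ * ys)))) := by
  have hb : β₀ * Real.exp (-μ₀ * τ) ≠ 0 := by positivity
  set c := δ * γ₀ * ys with hc_def
  have hc : 0 < c := by positivity
  set s := Real.sqrt c with hs_def
  have hs : 0 < s := Real.sqrt_pos.mpr hc
  have hssq : s ^ 2 = c := Real.sq_sqrt hc.le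
  have hπ : 0 < Real.pi := Real.pi_pos
  -- from condition, s*τ = 2π n
  have hcond : (∃ n : ℕ, 0 < n ∧ τ * s / (2 * Real.pi) = n) ↔ Real.cos (s * τ) = 1 := by
    constructor
    · rintro ⟨n, hn, heq⟩
      rw [Real.cos_eq_one_iff]
      refine ⟨(n : ℤ), ?_⟩
      push_cast
      field_simp at heq
      linarith [heq]
    · intro h
      rcases (Real.cos_eq_one_iff _).mp h with ⟨k, hk⟩
      have hkpos : 0 < k := by
        by_contra hkn
        push_neg at hkn
        have : (k : ℝ) ≤ 0 := by exact_mod_cast hkn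
        nlinarith [mul_pos hs hτ]
      refine ⟨k.toNat, by omega, ?_⟩
      have hkr : ((k.toNat : ℕ) : ℝ) = (k : ℝ) := by
        exact_mod_cast Int.toNat_of_nonneg hkpos.le
      rw [hkr]
      field_simp
      linarith [hk]
  constructor
  · constructor
    · rintro ⟨ω, hω, heq⟩
      rw [key _ _ _ _ hb hω] at heq
      obtain ⟨hcos, hsq⟩ := heq
      have : ω = s ∨ ω = -s := by
        have h2 : (ω - s) * (ω + s) = 0 := by nlinarith
        rcases mul_eq_zero.mp h2 with h | h
        · left; linarith
        · right; linarith
      rw [hcond]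
      rcases this with rfl | rfl
      · exact hcos
      · rw [show -s * τ = -(s * τ) by ring, Real.cos_neg] at hcos
        exact hcos
    · intro h
      refine ⟨s, hs.ne', ?_⟩
      rw [key _ _ _ _ hb hs.ne']
      exact ⟨hcond.mp h, hssq⟩
  · intro h ω hω
    rw [key _ _ _ _ hb hω]
    have hcos := hcond.mp h
    constructor
    · rintro ⟨hcosω, hsq⟩
      have h2 : (ω - s) * (ω + s) = 0 := by nlinarith
      rcases mul_eq_zero.mp h2 with h | h
      · left; linarith
      · right; linarith
    · rintro (rfl | rfl)
      · exact ⟨hcos, hssq⟩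
      · refine ⟨?_, by rw [neg_pow]; simpa using hssq⟩
        rw [show -s * τ = -(s * τ) by ring, Real.cos_neg]
        exact hcos
end

section
/- Let (X, y) be a C¹ solution on [τ,∞) of X'(t) = β₀e^{-μ₀τ}X(t-τ) - μ₀X(t) - γ₀X(t)y(t), y'(t) = αγ₀X(t)y(t) - δy(t), with X(t) > 0 and y(t) > 0 for all t. Then the function F(t) = αX* g(X(t)/X*) + y* g(y(t)/y*) + αβ₀e^{-μ₀τ}X* ∫₀^τ g(X(t+s-τ)/X*) ds satisfies F'(t) = -αβ₀X*e^{-μ₀τ} g(X(t-τ)/X(t)) ≤ 0 for all t ≥ τ; in particular F is nonincreasing. -/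
/-!
Differentiate along a solution. Once the equilibrium relations `δ = α γ₀ X*` and
`μ₀ = β₀ e^{-μ₀τ} - γ₀ y*` are substituted, all `y`-dependence in the derivative of the two
point terms cancels, and the delay integral, being `∫_{t-τ}^t g(X/X*)`, contributes
`g(X(t)/X*) - g(X(t-τ)/X*)`. What remains collapses to `-α β₀ e^{-μ₀τ} X* g(X(t-τ)/X(t))`,
which is nonpositive because `g ≥ 0` on `(0, ∞)`.
-/

open Real

lemma hasDerivAt_sub_log_sub_one {x : ℝ} (hx : x ≠ 0) :
    HasDerivAt (fun x => x - log x - 1) (1 - x⁻¹) x :=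
  ((hasDerivAt_id x).sub (hasDerivAt_log hx)).sub_const 1

lemma sub_log_sub_one_nonneg {x : ℝ} (hx : 0 < x) : 0 ≤ x - log x - 1 := by
  linarith [log_le_sub_one_of_pos hx]

lemma integral_comp_add_sub_eq_sub {E : Type*} [NormedAddCommGroup E] [NormedSpace ℝ E]
    {G : ℝ → E} (hG : Continuous G) (τ t : ℝ) :
    ∫ s in (0 : ℝ)..τ, G (t + s - τ) = (∫ u in (0 : ℝ)..t, G u) - ∫ u in (0 : ℝ)..(t - τ), G u := by
  have hshift : ∫ s in (0 : ℝ)..τ, G (t + s - τ) = ∫ s in (0 : ℝ)..τ, G (s + (t - τ)) := by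
    congr 1; ext s; ring_nf
  rw [hshift, intervalIntegral.integral_comp_add_right, zero_add, add_sub_cancel,
    intervalIntegral.integral_interval_sub_left (hG.intervalIntegrable _ _)
      (hG.intervalIntegrable _ _)]

lemma hasDerivAt_integral_comp_add_sub {E : Type*} [NormedAddCommGroup E] [NormedSpace ℝ E]
    [CompleteSpace E] {G : ℝ → E} (hG : Continuous G) (τ t : ℝ) :
    HasDerivAt (fun t => ∫ s in (0 : ℝ)..τ, G (t + s - τ)) (G t - G (t - τ)) t := by
  simp only [integral_comp_add_sub_eq_sub hG τ]
  have hupper := (hG.integral_hasStrictDerivAt 0 t).hasDerivAt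
  have hlower := (hG.integral_hasStrictDerivAt 0 (t - τ)).hasDerivAt.comp_sub_const t τ
  exact hupper.sub hlower

lemma lyapunov_derivative_eq {α γ b μ δ Xs ys x xτ y : ℝ} (hx : 0 < x) (hxτ : 0 < xτ)
    (hXs : 0 < Xs) (hy : y ≠ 0) (hys : ys ≠ 0) (hδ : δ = α * γ * Xs) (hμ : μ = b - γ * ys) :
    α * Xs * ((1 - (x / Xs)⁻¹) * ((b * xτ - μ * x - γ * x * y) / Xs))
      + ys * ((1 - (y / ys)⁻¹) * ((α * γ * x * y - δ * y) / ys))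
      + α * b * Xs * ((x / Xs - log (x / Xs) - 1) - (xτ / Xs - log (xτ / Xs) - 1))
      = -(α * b * Xs) * (xτ / x - log (xτ / x) - 1) := by
  rw [log_div hx.ne' hXs.ne', log_div hxτ.ne' hXs.ne', log_div hxτ.ne' hx.ne']
  subst hδ hμ
  field_simp
  ring

open MeasureTheory intervalIntegral in
theorem lyapunov_functional_nonincreasing_general
    (β₀ μ₀ γ₀ δ τ α : ℝ)
    (hμ : 0 < μ₀) (hγ : 0 < γ₀) (hδ : 0 < δ)
    (hα : 0 < α ∧ α < 1) (hR : β₀ * Real.exp (-μ₀ * τ) / μ₀ > 1)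
    (Xs ys : ℝ) (hXs : Xs = δ / (α * γ₀))
    (hys : ys = (β₀ * Real.exp (-μ₀ * τ) - μ₀) / γ₀)
    (g : ℝ → ℝ) (hg : ∀ x, g x = x - Real.log x - 1)
    (X y : ℝ → ℝ)
    (hXC : Continuous X)
    (hXpos : ∀ t, 0 < X t) (hypos : ∀ t, 0 < y t)
    (hXode : ∀ t ≥ τ, HasDerivAt X
      (β₀ * Real.exp (-μ₀ * τ) * X (t - τ) - μ₀ * X t - γ₀ * X t * y t) t)
    (hyode : ∀ t ≥ τ, HasDerivAt y (α * γ₀ * X t * y t - δ * y t) t)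
    (F : ℝ → ℝ)
    (hF : ∀ t, F t = α * Xs * g (X t / Xs) + ys * g (y t / ys)
      + α * β₀ * Real.exp (-μ₀ * τ) * Xs *
          ∫ s in (0:ℝ)..τ, g (X (t + s - τ) / Xs)) :
    (∀ t ≥ τ, HasDerivWithinAt F
        (-(α * β₀ * Xs * Real.exp (-μ₀ * τ)) * g (X (t - τ) / X t))
        (Set.Ici τ) t ∧
      -(α * β₀ * Xs * Real.exp (-μ₀ * τ)) * g (X (t - τ) / X t) ≤ 0) ∧
    AntitoneOn F (Set.Ici τ) := by
  have hμb : μ₀ < β₀ * exp (-μ₀ * τ) := (one_lt_div hμ).mp hR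
  have hXs0 : 0 < Xs := hXs ▸ div_pos hδ (mul_pos hα.1 hγ)
  have hys0 : 0 < ys := hys ▸ div_pos (sub_pos.2 hμb) hγ
  simp only [hg] at hF ⊢
  have hG : Continuous fun u => X u / Xs - log (X u / Xs) - 1 :=
    ((hXC.div_const Xs).sub ((hXC.div_const Xs).log fun u => (div_pos (hXpos u) hXs0).ne')).sub
      continuous_const
  have hder : ∀ t ≥ τ, HasDerivAt F
      (-(α * β₀ * Xs * exp (-μ₀ * τ)) * (X (t - τ) / X t - log (X (t - τ) / X t) - 1)) t := by
    intro t ht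
    have hXterm := ((hasDerivAt_sub_log_sub_one (div_pos (hXpos t) hXs0).ne').comp t
      ((hXode t ht).div_const Xs)).const_mul (α * Xs)
    have hyterm := ((hasDerivAt_sub_log_sub_one (div_pos (hypos t) hys0).ne').comp t
      ((hyode t ht).div_const ys)).const_mul ys
    have hdelay := (hasDerivAt_integral_comp_add_sub hG τ t).const_mul
      (α * β₀ * exp (-μ₀ * τ) * Xs)
    rw [show F = _ from funext hF]
    refine ((hXterm.add hyterm).add hdelay).congr_deriv ?_
    have hδXs : δ = α * γ₀ * Xs := by rw [hXs, mul_div_cancel₀ _ (mul_pos hα.1 hγ).ne']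
    have hμys : μ₀ = β₀ * exp (-μ₀ * τ) - γ₀ * ys := by rw [hys]; field_simp; ring
    linear_combination lyapunov_derivative_eq (hXpos t) (hXpos (t - τ)) hXs0
      (hypos t).ne' hys0.ne' hδXs hμys
  have hnonpos (t : ℝ) :
      -(α * β₀ * Xs * exp (-μ₀ * τ)) * (X (t - τ) / X t - log (X (t - τ) / X t) - 1) ≤ 0 := by
    have hcoef : 0 < α * β₀ * Xs * exp (-μ₀ * τ) := by
      linarith [mul_pos (mul_pos hα.1 hXs0) (hμ.trans hμb)]
    rw [neg_mul, neg_nonpos]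
    exact mul_nonneg hcoef.le (sub_log_sub_one_nonneg (div_pos (hXpos _) (hXpos t)))
  refine ⟨fun t ht => ⟨(hder t ht).hasDerivWithinAt, hnonpos t⟩, ?_⟩
  refine antitoneOn_of_hasDerivWithinAt_nonpos (convex_Ici τ)
    (fun t ht => (hder t ht).continuousAt.continuousWithinAt) (fun t ht => ?_) (fun t _ => hnonpos t)
  rw [interior_Ici] at ht ⊢
  exact (hder t ht.le).hasDerivWithinAt

open MeasureTheory intervalIntegral in
theorem lyapunov_functional_nonincreasing
    (β₀ μ₀ γ₀ δ τ α : ℝ)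
    (hβ : 0 < β₀) (hμ : 0 < μ₀) (hγ : 0 < γ₀) (hδ : 0 < δ) (hτ : 0 < τ)
    (hα : 0 < α ∧ α < 1) (hR : β₀ * Real.exp (-μ₀ * τ) / μ₀ > 1)
    (Xs ys : ℝ) (hXs : Xs = δ / (α * γ₀))
    (hys : ys = (β₀ * Real.exp (-μ₀ * τ) - μ₀) / γ₀)
    (g : ℝ → ℝ) (hg : ∀ x, g x = x - Real.log x - 1)
    (X y : ℝ → ℝ)
    (hXC : Continuous X) (hyC : Continuous y)
    (hXpos : ∀ t, 0 < X t) (hypos : ∀ t, 0 < y t)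
    (hXode : ∀ t ≥ τ, HasDerivAt X
      (β₀ * Real.exp (-μ₀ * τ) * X (t - τ) - μ₀ * X t - γ₀ * X t * y t) t)
    (hyode : ∀ t ≥ τ, HasDerivAt y (α * γ₀ * X t * y t - δ * y t) t)
    (F : ℝ → ℝ)
    (hF : ∀ t, F t = α * Xs * g (X t / Xs) + ys * g (y t / ys)
      + α * β₀ * Real.exp (-μ₀ * τ) * Xs *
          ∫ s in (0:ℝ)..τ, g (X (t + s - τ) / Xs)) :
    (∀ t ≥ τ, HasDerivWithinAt F
        (-(α * β₀ * Xs * Real.exp (-μ₀ * τ)) * g (X (t - τ) / X t))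
        (Set.Ici τ) t ∧
      -(α * β₀ * Xs * Real.exp (-μ₀ * τ)) * g (X (t - τ) / X t) ≤ 0) ∧
    AntitoneOn F (Set.Ici τ) :=
  lyapunov_functional_nonincreasing_general β₀ μ₀ γ₀ δ τ α hμ hγ hδ hα hR Xs ys hXs hys g hg X y hXC
    hXpos hypos hXode hyode F hF
end

section
/- Let p be a continuous τ-periodic function on [τ,∞) that is part of a positive C¹ τ-periodic solution (p,q) of the Lotka–Volterra ODE p' = (β₀e^{-μ₀τ}-μ₀)p - γ₀pq, q' = αγ₀pq - δq, with (p,q) not constant. Then there exists t* ∈ [τ,2τ] with p(t*) = X*, and for any such t*, q(t*) ≠ y*. -/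
/-!
Rolle's theorem applied to the τ-periodic predator density `q` on `[τ, 2τ]` gives a time
where `q' = (αγ₀ p - δ) q` vanishes, i.e. `p = X*`. The Lotka–Volterra energy
`αγ₀ p - δ log p + γ₀ q - r log q` (with `r = β₀e^{-μ₀τ} - μ₀`) is conserved along the orbit and
attains its strict minimum exactly at the equilibrium `(X*, y*)`; so if the orbit passed through
`(X*, y*)` it would stay there for all time, contradicting that it is not constant.
-/

open Real Set

namespace LotkaVolterra

noncomputable def potential (a b x : ℝ) : ℝ := a * x - b * log x

-- `(r, c, e, d)` are the prey growth rate, predation rate, conversion rate and predator death rate.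
noncomputable def energy (r c e d x y : ℝ) : ℝ := potential e d x + potential c r y

section Potential

variable {a b x : ℝ}

theorem potential_lt (ha : 0 < a) (hb : 0 < b) (hx : 0 < x) (hne : x ≠ b / a) :
    potential a b (b / a) < potential a b x := by
  have hba : 0 < b / a := div_pos hb ha
  have hratio : x / (b / a) ≠ 1 := fun h => hne (by rwa [div_eq_one_iff_eq hba.ne'] at h)
  have hlog : log x - log (b / a) < x / (b / a) - 1 := by
    rw [← log_div hx.ne' hba.ne']
    exact log_lt_sub_one_of_pos (div_pos hx hba) hratio
  have hscale : b * (x / (b / a) - 1) = a * x - a * (b / a) := by field_simp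
  unfold potential
  nlinarith [mul_lt_mul_of_pos_left hlog hb]

theorem potential_le (ha : 0 < a) (hb : 0 < b) (hx : 0 < x) :
    potential a b (b / a) ≤ potential a b x := by
  rcases eq_or_ne x (b / a) with rfl | hne
  · exact le_rfl
  · exact (potential_lt ha hb hx hne).le

end Potential

section Energy

variable {r c e d : ℝ}

theorem eq_equilibrium_of_energy_eq (hr : 0 < r) (hc : 0 < c) (he : 0 < e) (hd : 0 < d)
    {x y : ℝ} (hx : 0 < x) (hy : 0 < y)
    (h : energy r c e d x y = energy r c e d (d / e) (r / c)) : x = d / e ∧ y = r / c := by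
  unfold energy at h
  have hpx := potential_le he hd hx
  have hpy := potential_le hc hr hy
  constructor
  · by_contra hne
    linarith [potential_lt he hd hx hne]
  · by_contra hne
    linarith [potential_lt hc hr hy hne]

theorem hasDerivAt_energy_comp {p q : ℝ → ℝ} {t : ℝ}
    (hp : HasDerivAt p (r * p t - c * p t * q t) t)
    (hq : HasDerivAt q (e * p t * q t - d * q t) t) (hpt : p t ≠ 0) (hqt : q t ≠ 0) :
    HasDerivAt (fun s => energy r c e d (p s) (q s)) 0 t := by
  have hpot_p := (hp.const_mul e).sub ((hp.log hpt).const_mul d)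
  have hpot_q := (hq.const_mul c).sub ((hq.log hqt).const_mul r)
  refine (hpot_p.add hpot_q).congr_deriv ?_
  field_simp
  ring

end Energy

theorem eq_of_forall_ge_hasDerivAt_zero {f : ℝ → ℝ} {a : ℝ}
    (hf : ∀ t ≥ a, HasDerivAt f 0 t) {t : ℝ} (ht : a ≤ t) : f t = f a :=
  constant_of_has_deriv_right_zero
    (fun s hs => (hf s hs.1).continuousAt.continuousWithinAt)
    (fun s hs => (hf s hs.1).hasDerivWithinAt) t ⟨ht, le_rfl⟩

theorem exists_eq_div_of_predator_eq {p q : ℝ → ℝ} {a b e d : ℝ} (hab : a < b)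
    (he : e ≠ 0)
    (hq : ∀ t ∈ Icc a b, HasDerivAt q (e * p t * q t - d * q t) t)
    (hq0 : ∀ t ∈ Icc a b, q t ≠ 0) (hqab : q a = q b) : ∃ t ∈ Ioo a b, p t = d / e := by
  obtain ⟨t, ht, hderiv⟩ := exists_hasDerivAt_eq_zero hab
    (fun s hs => (hq s hs).continuousAt.continuousWithinAt) hqab
    (fun s hs => hq s (Ioo_subset_Icc_self hs))
  refine ⟨t, ht, ?_⟩
  have hfactor : (e * p t - d) * q t = 0 := by linear_combination hderiv
  rw [eq_div_iff he]
  linear_combination (mul_eq_zero.mp hfactor).resolve_right (hq0 t (Ioo_subset_Icc_self ht))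

end LotkaVolterra

open LotkaVolterra

theorem periodic_orbit_crosses_Xstar_with_q_ne_ystar_general
    (β₀ μ₀ γ₀ δ τ α : ℝ)
    (hγ : 0 < γ₀) (hδ : 0 < δ) (hτ : 0 < τ)
    (hα : 0 < α ∧ α < 1) (hR : β₀ * Real.exp (-μ₀ * τ) > μ₀)
    (Xs ys : ℝ) (hXs : Xs = δ / (α * γ₀))
    (hys : ys = (β₀ * Real.exp (-μ₀ * τ) - μ₀) / γ₀)
    (p q : ℝ → ℝ)
    (hppos : ∀ t ≥ τ, 0 < p t) (hqpos : ∀ t ≥ τ, 0 < q t)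
    (hpode : ∀ t ≥ τ, HasDerivAt p
      ((β₀ * Real.exp (-μ₀ * τ) - μ₀) * p t - γ₀ * p t * q t) t)
    (hqode : ∀ t ≥ τ, HasDerivAt q (α * γ₀ * p t * q t - δ * q t) t)
    (hper : ∀ t ≥ τ, p (t + τ) = p t ∧ q (t + τ) = q t)
    (hnonconst : ¬ (∀ t ≥ τ, ∀ s ≥ τ, p t = p s ∧ q t = q s)) :
    (∃ ts ∈ Set.Icc τ (2 * τ), p ts = Xs) ∧
    (∀ ts ∈ Set.Icc τ (2 * τ), p ts = Xs → q ts ≠ ys) := by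
  subst hXs hys
  set r := β₀ * Real.exp (-μ₀ * τ) - μ₀
  have hr : 0 < r := sub_pos.mpr hR
  have he : 0 < α * γ₀ := mul_pos hα.1 hγ
  constructor
  · have hq_period : q τ = q (2 * τ) := by rw [two_mul, (hper τ le_rfl).2]
    obtain ⟨t, ht, hpt⟩ := exists_eq_div_of_predator_eq (by linarith) he.ne'
      (fun t ht => hqode t ht.1) (fun t ht => (hqpos t ht.1).ne') hq_period
    exact ⟨t, Ioo_subset_Icc_self ht, hpt⟩
  · intro ts hts hpts hqts
    have hconst : ∀ t ≥ τ,
        energy r γ₀ (α * γ₀) δ (p t) (q t) = energy r γ₀ (α * γ₀) δ (p τ) (q τ) :=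
      fun t => eq_of_forall_ge_hasDerivAt_zero fun s hs =>
        hasDerivAt_energy_comp (hpode s hs) (hqode s hs) (hppos s hs).ne' (hqpos s hs).ne'
    have hequil : ∀ t ≥ τ, p t = δ / (α * γ₀) ∧ q t = r / γ₀ := fun t ht =>
      eq_equilibrium_of_energy_eq hr hγ he hδ (hppos t ht) (hqpos t ht)
        (by rw [← hpts, ← hqts, hconst t ht, hconst ts hts.1])
    exact hnonconst fun t ht s hs => by
      rw [(hequil t ht).1, (hequil t ht).2, (hequil s hs).1, (hequil s hs).2]
      exact ⟨rfl, rfl⟩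

theorem periodic_orbit_crosses_Xstar_with_q_ne_ystar
    (β₀ μ₀ γ₀ δ τ α : ℝ)
    (hβ : 0 < β₀) (hμ : 0 < μ₀) (hγ : 0 < γ₀) (hδ : 0 < δ) (hτ : 0 < τ)
    (hα : 0 < α ∧ α < 1) (hR : β₀ * Real.exp (-μ₀ * τ) > μ₀)
    (Xs ys : ℝ) (hXs : Xs = δ / (α * γ₀))
    (hys : ys = (β₀ * Real.exp (-μ₀ * τ) - μ₀) / γ₀)
    (p q : ℝ → ℝ)
    (hppos : ∀ t ≥ τ, 0 < p t) (hqpos : ∀ t ≥ τ, 0 < q t)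
    (hpC : ContinuousOn p (Set.Ici τ))
    (hpode : ∀ t ≥ τ, HasDerivAt p
      ((β₀ * Real.exp (-μ₀ * τ) - μ₀) * p t - γ₀ * p t * q t) t)
    (hqode : ∀ t ≥ τ, HasDerivAt q (α * γ₀ * p t * q t - δ * q t) t)
    (hper : ∀ t ≥ τ, p (t + τ) = p t ∧ q (t + τ) = q t)
    (hnonconst : ¬ (∀ t ≥ τ, ∀ s ≥ τ, p t = p s ∧ q t = q s)) :
    (∃ ts ∈ Set.Icc τ (2 * τ), p ts = Xs) ∧
    (∀ ts ∈ Set.Icc τ (2 * τ), p ts = Xs → q ts ≠ ys) :=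
  periodic_orbit_crosses_Xstar_with_q_ne_ystar_general β₀ μ₀ γ₀ δ τ α hγ hδ hτ hα hR Xs ys hXs hys p
    q hppos hqpos hpode hqode hper hnonconst
end
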